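/- arXiv:2309.00508 — 2 statements merged into one kernel-verified Lean document; each statement's English description precedes it below -/
import Mathlib

section
/- Let σ : ℝ → ℝ be s-times continuously differentiable such that σ^{(s)} is rapidly decreasing and satisfies non-asymptotic symmetry: there is c > 1 with liminf_{x→+∞} |σ^{(s)}(x)|/|σ^{(s)}(−x)| ≥ c or liminf_{x→−∞} |σ^{(s)}(x)|/|σ^{(s)}(−x)| ≥ c. Then for any pairwise distinct nonzero w_1, …, w_r ∈ ℝ^d, the functions σ(w_1·x), …, σ(w_r·x) are linearly independent. -/
/-!
After restricting to a line `t ↦ t • v` on which the numbers `bₖ = ⟪wₖ, v⟫` are distinct and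
nonzero, and differentiating `s` times, it suffices to show that the dilations `t ↦ f (bₖ t)` of
`f = σ⁽ˢ⁾` are linearly independent. In a vanishing combination let `m` be the least `|bₖ|` with a
nonzero coefficient. By rapid decrease every dilation by `|b| > m` is `o(f (± m t))` as `|t| → ∞`,
so the coefficients `α, β` of `f (m t)` and `f (-m t)` satisfy `α f (m t) + β f (-m t) = o(f (m t))`
as `t → ∞` and the same with `α, β` swapped. The asymmetry `|f (-x)| ≤ |f x| / c` for large `x`
turns these into `c |α| ≤ |β|` and `c |β| ≤ |α|`, so `α = β = 0` since `c > 1`.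
-/

open Filter Asymptotics Finset

theorem exists_inner_injective_ne_zero {E : Type*} [NormedAddCommGroup E] [InnerProductSpace ℝ E]
    {ι : Type*} [Finite ι] {w : ι → E} (hw : Function.Injective w) (hw0 : ∀ k, w k ≠ 0) :
    ∃ v : E, Function.Injective (fun k => inner ℝ (w k) v) ∧ ∀ k, inner ℝ (w k) v ≠ 0 := by
  let u : ι ⊕ {p : ι × ι // p.1 ≠ p.2} → E := Sum.elim w fun p => w p.1.1 - w p.1.2
  have hu (i) : u i ≠ 0 := by
    rcases i with k | ⟨⟨k, j⟩, hkj⟩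
    · exact hw0 k
    · exact sub_ne_zero.mpr (hw.ne hkj)
  obtain ⟨v, hv⟩ := Module.Dual.exists_forall_ne_zero_of_forall_exists
    (fun i => innerₛₗ ℝ (u i)) fun i => ⟨u i, by simpa using hu i⟩
  refine ⟨v, fun k j hkj => ?_, fun k => hv (.inl k)⟩
  by_contra hne
  exact hv (.inr ⟨(k, j), hne⟩) (by simpa [u, inner_sub_left, sub_eq_zero] using hkj)

theorem LinearIndependent.of_iteratedDeriv_comp_mul {𝕜 : Type*} [NontriviallyNormedField 𝕜]
    {σ : 𝕜 → 𝕜} {n : ℕ} (hσ : ContDiff 𝕜 n σ) {ι : Type*} {b : ι → 𝕜} (hb : ∀ k, b k ≠ 0)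
    (h : LinearIndependent 𝕜 fun k t => iteratedDeriv n σ (b k * t)) :
    LinearIndependent 𝕜 fun k t => σ (b k * t) := by
  rw [linearIndependent_iff'] at h ⊢
  intro s g hg i hi
  have hderiv : ∑ k ∈ s, (g k * b k ^ n) • (fun t => iteratedDeriv n σ (b k * t)) = 0 := by
    funext t
    have hcd (k : ι) : ContDiffAt 𝕜 n (g k • fun t => σ (b k * t)) t :=
      ((hσ.comp (contDiff_const.mul contDiff_id)).const_smul (g k)).contDiffAt
    have := congrArg (fun F => iteratedDeriv n F t) hg
    simp only [iteratedDeriv_sum fun k _ => hcd k] at this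
    simpa [iteratedDeriv_comp_const_mul hσ, mul_assoc] using this
  exact (mul_eq_zero.mp (h s _ hderiv i hi)).resolve_right (pow_ne_zero n (hb i))

theorem eventually_mul_abs_lt_of_le_liminf {α : Type*} {l : Filter α} {u v : α → ℝ} {c c' : ℝ}
    (h : c ≤ liminf (fun x => |u x| / |v x|) l) (hc' : c' < c) (hc'0 : 0 ≤ c') :
    ∀ᶠ x in l, c' * |v x| < |u x| := by
  have hbdd : IsBoundedUnder (· ≥ ·) l fun x => |u x| / |v x| :=
    isBoundedUnder_of_eventually_ge (Eventually.of_forall fun x => by positivity)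
  filter_upwards [eventually_lt_of_lt_liminf (hc'.trans_le h) hbdd] with x hx
  have hv : 0 < |v x| := by
    by_contra! hv0
    rw [le_antisymm hv0 (abs_nonneg _), div_zero] at hx
    linarith
  exact (lt_div_iff₀ hv).mp hx

theorem mul_abs_le_abs_of_isLittleO {α : Type*} {l : Filter α} [l.NeBot] {F G : α → ℝ}
    {a b c : ℝ} (hc : 0 < c) (hGF : ∀ᶠ x in l, c * |G x| < |F x|)
    (h : (fun x => a * F x + b * G x) =o[l] F) : c * |a| ≤ |b| := by
  refine le_of_forall_pos_le_add fun ε hε => ?_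
  obtain ⟨x, hx, hGFx⟩ := ((h.bound (div_pos hε hc)).and hGF).exists
  rw [Real.norm_eq_abs, Real.norm_eq_abs] at hx
  have hF : 0 < |F x| := (mul_nonneg hc.le (abs_nonneg _)).trans_lt hGFx
  refine le_of_mul_le_mul_right ?_ hF
  calc c * |a| * |F x| = c * |(a * F x + b * G x) - b * G x| := by
        rw [add_sub_cancel_right, abs_mul, mul_assoc]
    _ ≤ c * (|a * F x + b * G x| + |b| * |G x|) := by
        grw [abs_sub, abs_mul]
    _ ≤ c * (ε / c * |F x|) + |b| * (c * |G x|) := by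
        nlinarith [abs_nonneg b, abs_nonneg (G x)]
    _ ≤ (|b| + ε) * |F x| := by
        rw [← mul_assoc, mul_div_cancel₀ _ hc.ne']
        nlinarith [abs_nonneg b]

theorem Finsupp.sum_support_mul_eq_of_le_abs {R : Type*} [Semiring R] (l : ℝ →₀ R) {m : ℝ}
    (hm : 0 < m) (hl : ∀ y ∈ l.support, m ≤ |y|) (F : ℝ → R) :
    ∑ y ∈ l.support, l y * F y =
      l m * F m + l (-m) * F (-m) + ∑ y ∈ l.support with m < |y|, l y * F y := by
  rw [← sum_filter_not_add_sum_filter l.support (m < |·|),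
    ← sum_pair (f := fun y => l y * F y) (neg_lt_self hm).ne']
  congr 1
  refine sum_subset (fun y hy => ?_) fun y hy hyl => ?_
  · rw [mem_filter, not_lt] at hy
    simpa using abs_eq hm.le |>.mp (le_antisymm hy.2 (hl y hy.1))
  · obtain rfl | rfl : y = m ∨ y = -m := by simpa using hy
    all_goals simp_all [abs_of_pos hm]

def RapidlyDecreasing (f : ℝ → ℝ) : Prop :=
  ∀ ε : ℝ, 0 < ε → ∃ M : ℝ, ∀ x y : ℝ,
    M ≤ |x| → M ≤ |y| → M ≤ |y| - |x| → |f y| ≤ ε * |f x|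

namespace RapidlyDecreasing

variable {f : ℝ → ℝ}

theorem comp_neg (hf : RapidlyDecreasing f) : RapidlyDecreasing fun x => f (-x) := by
  intro ε hε
  obtain ⟨M, hM⟩ := hf ε hε
  exact ⟨M, fun x y hx hy hxy => by
    simpa using hM (-x) (-y) (by rwa [abs_neg]) (by rwa [abs_neg]) (by rwa [abs_neg, abs_neg])⟩

theorem isLittleO_comp_mul (hf : RapidlyDecreasing f) {a y : ℝ} (ha : a ≠ 0) (hay : |a| < |y|) :
    (fun t => f (y * t)) =o[cocompact ℝ] fun t => f (a * t) := by
  refine IsLittleO.of_bound fun ε hε => ?_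
  obtain ⟨M, hM⟩ := hf ε hε
  have ha' : 0 < |a| := abs_pos.mpr ha
  have hgap : 0 < |y| - |a| := sub_pos.mpr hay
  filter_upwards [tendsto_norm_cocompact_atTop.eventually_ge_atTop
    (max (M / |a|) (M / (|y| - |a|)))] with t ht
  rw [Real.norm_eq_abs, max_le_iff, div_le_iff₀ ha', div_le_iff₀ hgap] at ht
  simp only [Real.norm_eq_abs]
  obtain ⟨hta, hty⟩ := ht
  refine hM _ _ ?_ ?_ ?_ <;> simp only [abs_mul] <;> nlinarith [abs_nonneg t]

theorem linearIndepOn_comp_mul (hf : RapidlyDecreasing f) {c : ℝ} (hc : 1 < c)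
    (hsym : ∀ᶠ x in atTop, c * |f (-x)| < |f x|) :
    LinearIndepOn ℝ (fun y t => f (y * t)) {0}ᶜ := by
  rw [linearIndepOn_iff]
  intro l hl hrel
  by_contra hl0
  obtain ⟨p, hp, hpmin⟩ :=
    l.support.exists_min_image (|·|) (Finsupp.support_nonempty_iff.mpr hl0)
  set m := |p|
  have hm : 0 < m := abs_pos.mpr (hl hp)
  set B := {y ∈ l.support | m < |y|}
  have hsplit (t : ℝ) :
      l m * f (m * t) + l (-m) * f (-m * t) = -∑ y ∈ B, l y * f (y * t) := by
    have hsum : ∑ y ∈ l.support, l y * f (y * t) = 0 := by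
      simpa [Finsupp.linearCombination_apply, Finsupp.sum] using congrFun hrel t
    rw [l.sum_support_mul_eq_of_le_abs hm hpmin] at hsum
    linear_combination hsum
  have hleading (a : ℝ) (ha : |a| = m) :
      (fun t => l m * f (m * t) + l (-m) * f (-m * t)) =o[cocompact ℝ] fun t => f (a * t) := by
    have ha0 : a ≠ 0 := abs_pos.mp (ha ▸ hm)
    simp_rw [hsplit]
    refine (IsLittleO.fun_sum fun y hy => ?_).neg_left
    exact (hf.isLittleO_comp_mul ha0 (ha ▸ (mem_filter.mp hy).2)).const_mul_left _
  have hsym_top : ∀ᶠ t in atTop, c * |f (-m * t)| < |f (m * t)| := by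
    simpa using (tendsto_id.const_mul_atTop hm).eventually hsym
  have hsym_bot : ∀ᶠ t in atBot, c * |f (m * t)| < |f (-m * t)| := by
    simpa using (tendsto_id.const_mul_atBot_of_neg (neg_lt_zero.mpr hm)).eventually hsym
  have h_top : c * |l m| ≤ |l (-m)| :=
    mul_abs_le_abs_of_isLittleO (by linarith) hsym_top
      ((hleading m (abs_of_pos hm)).mono atTop_le_cocompact)
  have h_bot : c * |l (-m)| ≤ |l m| :=
    mul_abs_le_abs_of_isLittleO (by linarith) hsym_bot
      (by simpa only [add_comm] using
        (hleading (-m) (by simp [abs_of_pos hm])).mono atBot_le_cocompact)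
  have hzero : l m = 0 ∧ l (-m) = 0 := by
    constructor <;> rw [← abs_eq_zero] <;> nlinarith [abs_nonneg (l m), abs_nonneg (l (-m))]
  rcases abs_choice p with hp' | hp'
  · exact Finsupp.mem_support_iff.mp hp (by rw [← hp']; exact hzero.1)
  · exact Finsupp.mem_support_iff.mp hp (by rw [← neg_neg p, ← hp']; exact hzero.2)

theorem linearIndependent_comp_mul_of_atTop (hf : RapidlyDecreasing f) {c : ℝ} (hc : 1 < c)
    (hsym : ∀ᶠ x in atTop, c * |f (-x)| < |f x|) {ι : Type*} {b : ι → ℝ}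
    (hb : Function.Injective b) (hb0 : ∀ k, b k ≠ 0) :
    LinearIndependent ℝ fun k t => f (b k * t) := by
  rw [← linearIndepOn_univ_iff]
  have hrange : b '' Set.univ ⊆ {0}ᶜ := by simpa [Set.subset_def] using hb0
  exact ((hf.linearIndepOn_comp_mul hc hsym).mono hrange).comp_of_image hb.injOn

theorem linearIndependent_comp_mul (hf : RapidlyDecreasing f) {c : ℝ} (hc : 1 < c)
    (hsym : (∀ᶠ x in atTop, c * |f (-x)| < |f x|) ∨ ∀ᶠ x in atBot, c * |f (-x)| < |f x|)
    {ι : Type*} {b : ι → ℝ} (hb : Function.Injective b) (hb0 : ∀ k, b k ≠ 0) :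
    LinearIndependent ℝ fun k t => f (b k * t) := by
  rcases hsym with htop | hbot
  · exact hf.linearIndependent_comp_mul_of_atTop hc htop hb hb0
  · have hsym' : ∀ᶠ x in atTop, c * |f (-(-x))| < |f (-x)| := by
      simpa using tendsto_neg_atTop_atBot.eventually hbot
    simpa using hf.comp_neg.linearIndependent_comp_mul_of_atTop hc hsym' (neg_injective.comp hb)
      fun k => neg_ne_zero.mpr (hb0 k)

end RapidlyDecreasing

theorem stmt7_general (σ : ℝ → ℝ) (s : ℕ) (hσ : ContDiff ℝ s σ)
    (hrapid : ∀ ε : ℝ, 0 < ε → ∃ M : ℝ, ∀ x y : ℝ,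
      M ≤ |x| → M ≤ |y| → M ≤ |y| - |x| →
        |iteratedDeriv s σ y| ≤ ε * |iteratedDeriv s σ x|)
    (c : ℝ) (hc : 1 < c)
    (hsym :
      c ≤ Filter.liminf
            (fun x => |iteratedDeriv s σ x| / |iteratedDeriv s σ (-x)|) Filter.atTop ∨
      c ≤ Filter.liminf
            (fun x => |iteratedDeriv s σ x| / |iteratedDeriv s σ (-x)|) Filter.atBot)
    (d r : ℕ) (w : Fin r → EuclideanSpace ℝ (Fin d))
    (hw : Function.Injective w) (hw0 : ∀ k, w k ≠ 0) :
    LinearIndependent ℝ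
      (fun k => fun x : EuclideanSpace ℝ (Fin d) => σ (inner ℝ (w k) x : ℝ)) := by
  obtain ⟨v, hv, hv0⟩ := exists_inner_injective_ne_zero hw hw0
  obtain ⟨c', hc', hc'c⟩ := exists_between hc
  have hsym' := hsym.imp (eventually_mul_abs_lt_of_le_liminf · hc'c (by linarith))
    (eventually_mul_abs_lt_of_le_liminf · hc'c (by linarith))
  have hline := RapidlyDecreasing.linearIndependent_comp_mul hrapid hc' hsym' hv hv0
  have hrestrict : LinearMap.funLeft ℝ ℝ (fun t : ℝ => t • v) ∘
      (fun k x => σ (inner ℝ (w k) x)) = fun k t => σ (inner ℝ (w k) v * t) := by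
    funext k t
    simp [real_inner_smul_right, mul_comm]
  exact .of_comp _ (hrestrict ▸ hline.of_iteratedDeriv_comp_mul hσ hv0)

theorem stmt7 (σ : ℝ → ℝ) (s : ℕ) (hσ : ContDiff ℝ s σ)
    (hnz : ∃ M₀ : ℝ, ∀ x : ℝ, M₀ ≤ |x| → iteratedDeriv s σ x ≠ 0)
    (hrapid : ∀ ε : ℝ, 0 < ε → ∃ M : ℝ, ∀ x y : ℝ,
      M ≤ |x| → M ≤ |y| → M ≤ |y| - |x| →
        |iteratedDeriv s σ y| ≤ ε * |iteratedDeriv s σ x|)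
    (c : ℝ) (hc : 1 < c)
    (hsym :
      c ≤ Filter.liminf
            (fun x => |iteratedDeriv s σ x| / |iteratedDeriv s σ (-x)|) Filter.atTop ∨
      c ≤ Filter.liminf
            (fun x => |iteratedDeriv s σ x| / |iteratedDeriv s σ (-x)|) Filter.atBot)
    (d r : ℕ) (w : Fin r → EuclideanSpace ℝ (Fin d))
    (hw : Function.Injective w) (hw0 : ∀ k, w k ≠ 0) :
    LinearIndependent ℝ
      (fun k => fun x : EuclideanSpace ℝ (Fin d) => σ (inner ℝ (w k) x : ℝ)) :=
  stmt7_general σ s hσ hrapid c hc hsym d r w hw hw0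
end

section
/- Let σ be a good activation and w_1, …, w_r ∈ ℝ^d pairwise distinct. Then there exist x_1, …, x_r ∈ ℝ^d such that the r × r matrix with entries σ(w_k · x_i) is invertible. -/
/-!
Pick a direction `v` on which the inner products `a k = ⟪w k, v⟫` are pairwise distinct. A linear
relation `∑ l k σ(⟪w k, ·⟫) = 0` restricted to the line `ℝ v` expands into the power series
`∑ⱼ c j (∑ₖ l k a k ^ j) tʲ = 0` near `0`, so `∑ₖ l k a k ^ j = 0` whenever `c j ≠ 0`. Dividing
by the largest `|a k|` on the support of `l` and letting `j → ∞` along even and along odd exponents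
isolates the (at most two) extremal nodes `±m`, and forces their weights to vanish. Hence the
functions `σ(⟪w k, ·⟫)` are linearly independent, and linearly independent functions on any set
admit sample points at which their evaluation matrix is invertible.
-/

open Filter Finset Topology Module

theorem LinearIndependent.span_range_eval_eq_top {ι α K : Type*} [Fintype ι] [Field K]
    {f : ι → α → K} (hf : LinearIndependent K f) :
    Submodule.span K (Set.range fun y k => f k y) = ⊤ := by
  classical
  by_contra hne
  obtain ⟨g, hg0, hg⟩ := Submodule.exists_le_ker_of_lt_top _ (lt_top_iff_ne_top.2 hne)
  have hrel : ∑ k, g (Pi.single k 1) • f k = 0 := funext fun y => by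
    have := hg (Submodule.subset_span ⟨y, rfl⟩)
    rw [LinearMap.mem_ker, LinearMap.pi_apply_eq_sum_univ g] at this
    rw [Pi.zero_apply, ← this, Finset.sum_apply]
    refine Finset.sum_congr rfl fun k _ => ?_
    have hsingle : (Pi.single k 1 : ι → K) = fun j => if k = j then 1 else 0 :=
      funext fun j => by simp [Pi.single_apply, eq_comm]
    simp [hsingle, mul_comm]
  exact hg0 ((Pi.basisFun K ι).ext fun k => by
    simpa using Fintype.linearIndependent_iff.1 hf _ hrel k)

theorem LinearIndependent.exists_det_ne_zero {ι α K : Type*} [Fintype ι] [DecidableEq ι]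
    [Field K] {f : ι → α → K} (hf : LinearIndependent K f) :
    ∃ x : ι → α, (Matrix.of fun i k => f k (x i)).det ≠ 0 := by
  obtain ⟨κ, a, -, hspan, hli⟩ := exists_linearIndependent' K fun y k => f k y
  rw [hf.span_range_eval_eq_top] at hspan
  let e := (Pi.basisFun K ι).indexEquiv (Basis.mk hli hspan.ge)
  refine ⟨a ∘ e, ?_⟩
  rw [← isUnit_iff_ne_zero, ← Matrix.isUnit_iff_isUnit_det,
    ← Matrix.linearIndependent_rows_iff_isUnit]
  exact hli.comp e e.injective

theorem exists_injective_inner {ι E : Type*} [Finite ι] [NormedAddCommGroup E]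
    [InnerProductSpace ℝ E] {w : ι → E} (hw : Function.Injective w) :
    ∃ v : E, Function.Injective fun k => (inner ℝ (w k) v : ℝ) := by
  obtain ⟨v, hv⟩ := Module.Dual.exists_forall_ne_zero_of_forall_exists
    (fun p : {p : ι × ι // p.1 ≠ p.2} => innerₗ E (w p.1.1 - w p.1.2))
    fun p => ⟨w p.1.1 - w p.1.2, inner_self_ne_zero.2 (sub_ne_zero.2 (hw.ne p.2))⟩
  exact ⟨v, fun k k' h => by_contra fun hne =>
    hv ⟨(k, k'), hne⟩ (by simpa [inner_sub_left, sub_eq_zero] using h)⟩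

theorem eq_zero_of_eventually_hasSum_mul_pow_eq_zero {𝕜 : Type*} [NontriviallyNormedField 𝕜]
    {b : ℕ → 𝕜} (h : ∀ᶠ t in 𝓝 0, HasSum (fun j => b j * t ^ j) 0) : b = 0 := by
  obtain ⟨ε, hε, hball⟩ := Metric.eventually_nhds_iff_ball.1 h
  obtain ⟨t, ht0, htε⟩ := NormedField.exists_norm_lt 𝕜 hε
  set p := FormalMultilinearSeries.ofScalars 𝕜 b
  have hp : ∀ s : 𝕜, (fun n => p n fun _ => s) = fun j => b j * s ^ j := fun s => by
    funext n
    simp [p, mul_comm]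
  have hradius : (‖t‖₊ : ENNReal) ≤ p.radius := by
    refine p.le_radius_of_tendsto (l := 0) ?_
    have := (hball t (by simpa using htε)).summable.tendsto_atTop_zero.norm
    simpa [p, FormalMultilinearSeries.ofScalars_norm] using this
  have hseries : HasFPowerSeriesOnBall (fun _ => 0) p 0 ‖t‖₊ :=
    { r_le := hradius
      r_pos := by simpa using ht0
      hasSum := fun {y} hy => by
        rw [hp]
        refine hball y ?_
        rw [Metric.mem_eball, edist_zero_right] at hy
        rw [mem_ball_zero_iff]
        exact (show ‖y‖ < ‖t‖ by simpa [enorm_eq_nnnorm, ← NNReal.coe_lt_coe] using hy).trans htε }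
  exact (FormalMultilinearSeries.ofScalars_series_eq_zero 𝕜).1 hseries.hasFPowerSeriesAt.eq_zero

section PowerSums

variable {ι : Type*} [Fintype ι]

theorem tendsto_sum_abs_ne_one_mul_pow {l x : ι → ℝ} (hx : ∀ k, l k ≠ 0 → |x k| ≤ 1) :
    Tendsto (fun j => ∑ k with |x k| ≠ 1, l k * x k ^ j) atTop (𝓝 0) := by
  rw [← Finset.sum_const_zero (s := univ.filter fun k => |x k| ≠ 1)]
  refine tendsto_finsetSum _ fun k hk => ?_
  rcases eq_or_ne (l k) 0 with hl | hl
  · simp [hl]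
  · have hlt : |x k| < 1 := (hx k hl).lt_of_ne (Finset.mem_filter.1 hk).2
    simpa using (tendsto_pow_atTop_nhds_zero_of_abs_lt_one hlt).const_mul (l k)

theorem eq_zero_of_frequently_sum_mul_pow_eq_zero_of_abs_eq_one {l x : ι → ℝ}
    (hx : Function.Injective x) (hle : ∀ k, l k ≠ 0 → |x k| ≤ 1) {k₀ : ι} (hk₀ : |x k₀| = 1)
    (hodd : ∃ᶠ j in atTop, Odd j ∧ ∑ k, l k * x k ^ j = 0)
    (heven : ∃ᶠ j in atTop, Even j ∧ ∑ k, l k * x k ^ j = 0) : l k₀ = 0 := by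
  have hlim : ∀ (P : ℕ → Prop) (C : ℝ), (∃ᶠ j in atTop, P j ∧ ∑ k, l k * x k ^ j = 0) →
      (∀ j, P j → ∑ k with |x k| = 1, l k * x k ^ j = C) → C = 0 := by
    intro P C hfreq hC
    have htail := (tendsto_sum_abs_ne_one_mul_pow hle).neg
    rw [neg_zero] at htail
    refine tendsto_nhds_unique_of_frequently_eq tendsto_const_nhds htail
      (hfreq.mono fun j ⟨hPj, hj⟩ => ?_)
    rw [← hC j hPj, eq_neg_iff_add_eq_zero, Finset.sum_filter_add_sum_filter_not, hj]
  have hsq : ∀ k, |x k| = 1 → x k ^ 2 = 1 := fun k hk => by rw [← sq_abs, hk, one_pow]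
  have hsum0 : ∑ k with |x k| = 1, l k = 0 := hlim Even _ heven fun j ⟨i, hi⟩ =>
    Finset.sum_congr rfl fun k hk => by
      rw [hi, ← two_mul, pow_mul, hsq k (Finset.mem_filter.1 hk).2, one_pow, mul_one]
  have hsum1 : ∑ k with |x k| = 1, l k * x k = 0 := hlim Odd _ hodd fun j ⟨i, hi⟩ =>
    Finset.sum_congr rfl fun k hk => by
      rw [hi, pow_succ, pow_mul, hsq k (Finset.mem_filter.1 hk).2, one_pow, one_mul]
  -- on `|x k| = 1` the weight `1 + x k₀ * x k` vanishes except at `k₀`, where it is `2`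
  have hpair : ∑ k with |x k| = 1, l k * (1 + x k₀ * x k) = 2 * l k₀ := by
    rw [Finset.sum_eq_single_of_mem k₀ (by simpa using hk₀)]
    · linear_combination l k₀ * hsq k₀ hk₀
    · intro k hk hne
      have hneg : x k = -x k₀ :=
        (abs_eq_abs.1 ((Finset.mem_filter.1 hk).2.trans hk₀.symm)).resolve_left (hx.ne hne)
      rw [hneg]
      linear_combination -(l k) * hsq k₀ hk₀
  have hsplit : ∑ k with |x k| = 1, l k * (1 + x k₀ * x k)
      = ∑ k with |x k| = 1, l k + x k₀ * ∑ k with |x k| = 1, l k * x k := by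
    rw [Finset.mul_sum, ← Finset.sum_add_distrib]
    exact Finset.sum_congr rfl fun k _ => by ring
  rw [hpair, hsum0, hsum1] at hsplit
  linarith

theorem eq_zero_of_frequently_sum_mul_pow_eq_zero {a l : ι → ℝ} (ha : Function.Injective a)
    (h0 : ∑ k, l k = 0) (hodd : ∃ᶠ j in atTop, Odd j ∧ ∑ k, l k * a k ^ j = 0)
    (heven : ∃ᶠ j in atTop, Even j ∧ ∑ k, l k * a k ^ j = 0) : l = 0 := by
  by_contra hl
  obtain ⟨k₁, hk₁⟩ := Function.ne_iff.1 hl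
  obtain ⟨k₀, hk₀, hmax⟩ := (univ.filter fun k => l k ≠ 0).exists_max_image (fun k => |a k|)
    ⟨k₁, by simpa using hk₁⟩
  simp only [Finset.mem_filter, Finset.mem_univ, true_and] at hk₀ hmax
  rcases (abs_nonneg (a k₀)).eq_or_lt with hm | hm
  · have hsupp : ∀ k, k ≠ k₀ → l k = 0 := fun k hne => by
      by_contra hlk
      have hak : |a k| = |a k₀| := le_antisymm (hmax k hlk) (hm ▸ abs_nonneg _)
      exact hne (ha ((abs_eq_zero.1 (hak.trans hm.symm)).trans (abs_eq_zero.1 hm.symm).symm))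
    exact hk₀ (by rwa [Finset.sum_eq_single k₀ (fun k _ => hsupp k) (by simp)] at h0)
  · set x := fun k => a k / |a k₀|
    have hscale : ∀ j, ∑ k, l k * a k ^ j = 0 → ∑ k, l k * x k ^ j = 0 := fun j hj => by
      simp only [x, div_pow, mul_div_assoc', ← Finset.sum_div, hj, zero_div]
    refine hk₀ (eq_zero_of_frequently_sum_mul_pow_eq_zero_of_abs_eq_one (x := x)
      (fun k k' h => ha ((div_left_inj' hm.ne').1 h)) (fun k hk => ?_) ?_
      (hodd.mono fun j ⟨hj, hs⟩ => ⟨hj, hscale j hs⟩)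
      (heven.mono fun j ⟨hj, hs⟩ => ⟨hj, hscale j hs⟩))
    · rw [abs_div, abs_abs, div_le_one hm]
      exact hmax k hk
    · rw [abs_div, abs_abs, div_self hm.ne']

theorem linearIndependent_comp_mul {σ : ℝ → ℝ} {c : ℕ → ℝ}
    (hσ : ∀ᶠ t in 𝓝 0, HasSum (fun j => c j * t ^ j) (σ t)) (hc0 : c 0 ≠ 0)
    (hodd : ∃ᶠ j in atTop, Odd j ∧ c j ≠ 0) (heven : ∃ᶠ j in atTop, Even j ∧ c j ≠ 0)
    {a : ι → ℝ} (ha : Function.Injective a) :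
    LinearIndependent ℝ fun k t => σ (a k * t) := by
  rw [Fintype.linearIndependent_iff]
  intro l hl
  have hσa : ∀ᶠ t in 𝓝 0, ∀ k, HasSum (fun j => c j * (a k * t) ^ j) (σ (a k * t)) :=
    eventually_all.2 fun k =>
      ((continuous_const_mul (a k)).tendsto' 0 0 (mul_zero _)).eventually hσ
  have hcoef : ∀ j, c j * ∑ k, l k * a k ^ j = 0 := congrFun <|
    eq_zero_of_eventually_hasSum_mul_pow_eq_zero <| hσa.mono fun t ht => by
      have hsum := hasSum_sum fun k (_ : k ∈ univ) => (ht k).mul_left (l k)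
      have hl' : ∑ k, l k * σ (a k * t) = 0 := by simpa using congrFun hl t
      have hterm : ∀ j, ∑ k, l k * (c j * (a k * t) ^ j) = c j * (∑ k, l k * a k ^ j) * t ^ j :=
        fun j => by
          rw [Finset.mul_sum, Finset.sum_mul]
          exact Finset.sum_congr rfl fun k _ => by ring
      simpa only [hterm, hl'] using hsum
  have hpow : ∀ j, c j ≠ 0 → ∑ k, l k * a k ^ j = 0 := fun j hj =>
    (mul_eq_zero.1 (hcoef j)).resolve_left hj
  refine congrFun (eq_zero_of_frequently_sum_mul_pow_eq_zero ha ?_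
    (hodd.mono fun j ⟨hj, hc⟩ => ⟨hj, hpow j hc⟩)
    (heven.mono fun j ⟨hj, hc⟩ => ⟨hj, hpow j hc⟩))
  simpa using hpow 0 hc0

end PowerSums

theorem stmt8 (σ : ℝ → ℝ) (R : ℝ) (hR : 0 < R) (c : ℕ → ℝ)
    (hσ : ∀ x ∈ Set.Ioo (-R) R, HasSum (fun j => c j * x ^ j) (σ x))
    (hc0 : c 0 ≠ 0)
    (hodd : ∀ N : ℕ, ∃ j, Odd j ∧ N < j ∧ c j ≠ 0)
    (heven : ∀ N : ℕ, ∃ j, Even j ∧ N < j ∧ c j ≠ 0)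
    (d r : ℕ) (w : Fin r → EuclideanSpace ℝ (Fin d)) (hw : Function.Injective w) :
    ∃ x : Fin r → EuclideanSpace ℝ (Fin d),
      (Matrix.of fun i k => σ (inner ℝ (w k) (x i) : ℝ)).det ≠ 0 := by
  have hσ₀ : ∀ᶠ t in 𝓝 0, HasSum (fun j => c j * t ^ j) (σ t) :=
    eventually_of_mem (Ioo_mem_nhds (neg_neg_of_pos hR) hR) hσ
  have hfreq : ∀ P : ℕ → Prop, (∀ N, ∃ j, P j ∧ N < j ∧ c j ≠ 0) →
      ∃ᶠ j in atTop, P j ∧ c j ≠ 0 := fun P h =>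
    frequently_atTop'.2 fun N => (h N).imp fun j ⟨hP, hN, hc⟩ => ⟨hN, hP, hc⟩
  obtain ⟨v, hv⟩ := exists_injective_inner hw
  have hline := linearIndependent_comp_mul hσ₀ hc0 (hfreq Odd hodd) (hfreq Even heven) hv
  have hli : LinearIndependent ℝ fun k y => σ (inner ℝ (w k) y : ℝ) := by
    refine .of_comp (LinearMap.funLeft ℝ ℝ fun t : ℝ => t • v) ?_
    convert hline using 2 with k
    funext t
    simp [real_inner_smul_right, mul_comm]
  exact hli.exists_det_ne_zero
end
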